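/- On a ring Λ of L ≥ 6 sites, any configuration μ ∈ {0,1}^L in the image of the tiling-configuration map (i.e., arising from a VMD tiling by voids (0), monomers (100), and dimers (011000)) satisfies μₓ·μₓ₊₂ = 0 for all x ∈ ℤ/Lℤ. -/

import Mathlib

/-- The three tile types: void V = (0), monomer M = (100), dimer D = (011000). -/
inductive VMDTile | V | M | D
deriving DecidableEq

/-- The length of a tile. -/
def VMDTile.len : VMDTile → ℕ
  | .V => 1
  | .M => 3
  | .D => 6

/-- The occupation pattern of a tile at offset k. -/
def VMDTile.pat : VMDTile → ℕ → Fin 2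
  | .V, _ => 0
  | .M, k => if k = 0 then 1 else 0
  | .D, k => if k = 1 ∨ k = 2 then 1 else 0

/-- `s` is a VMD tiling of the ring ℤ/Lℤ reproducing the configuration `μ`. -/
def IsVMDTiling {L : ℕ} (μ : ZMod L → Fin 2) (s : ZMod L → Option VMDTile) : Prop :=
  (∀ y : ZMod L, ∃! p : ZMod L × VMDTile,
      s p.1 = some p.2 ∧ ∃ k : ℕ, k < p.2.len ∧ y = p.1 + (k : ZMod L)) ∧
  (∀ x : ZMod L, ∀ τ : VMDTile, s x = some τ →
      ∀ k : ℕ, k < τ.len → μ (x + (k : ZMod L)) = τ.pat k)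

/- An occupied site is the first site of a monomer or one of the two occupied sites of a dimer;
in each case the site two steps further lies in the same tile and is empty. -/

theorem VMDTile.add_two_lt_len_and_pat_eq_zero (τ : VMDTile) {k : ℕ} (hk : k < τ.len)
    (h : τ.pat k = 1) : k + 2 < τ.len ∧ τ.pat (k + 2) = 0 := by
  revert k
  cases τ <;> decide

theorem IsVMDTiling.apply_add_two_eq_zero {L : ℕ} {μ : ZMod L → Fin 2}
    {s : ZMod L → Option VMDTile} (hs : IsVMDTiling μ s) {x : ZMod L} (hx : μ x = 1) :
    μ (x + 2) = 0 := by
  obtain ⟨⟨p, τ⟩, ⟨hp, k, hk, rfl⟩, -⟩ := hs.1 x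
  have hpat := hs.2 p τ hp
  obtain ⟨hk2, hzero⟩ := τ.add_two_lt_len_and_pat_eq_zero hk (hpat k hk ▸ hx)
  rw [← hzero, ← hpat (k + 2) hk2, Nat.cast_add, Nat.cast_ofNat, add_assoc]

theorem stmt_18_general (L : ℕ) (μ : ZMod L → Fin 2)
    (s : ZMod L → Option VMDTile) (hs : IsVMDTiling μ s) :
    ∀ x : ZMod L, ((μ x : ℕ)) * ((μ (x + 2) : ℕ)) = 0 := by
  intro x
  by_cases hx : μ x = 1
  · simp [hs.apply_add_two_eq_zero hx]
  · simp [show μ x = 0 by omega]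

/-- any configuration arising from a VMD tiling of a ring of
L ≥ 6 sites satisfies μₓ·μₓ₊₂ = 0 for all x. -/
theorem stmt_18 (L : ℕ) (hL : 6 ≤ L) (μ : ZMod L → Fin 2)
    (s : ZMod L → Option VMDTile) (hs : IsVMDTiling μ s) :
    ∀ x : ZMod L, ((μ x : ℕ)) * ((μ (x + 2) : ℕ)) = 0 :=
  stmt_18_general L μ s hs
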